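/- arXiv:1505.02404 — 3 statements merged into one kernel-verified Lean document; each statement's English description precedes it below -/
import Mathlib

section
/- Let k ≥ 2 and l be integers with 2 ≤ l < k, let a ∈ ℝ and a₂ ∈ ℝ, a₂ ≠ 0. Suppose D₁, D₂, R : (0,δ) → (0,∞) satisfy, as s → 0⁺: D₂(s) = s²/2 + (a/2^k) s^{2k}(−log s) + o(s^{2k}(−log s)); D₁(s) = √2 s^{1/2} + (a/(2√2)) s^{k−1/2}(−log s) + o(s^{k−1/2}(−log s)); and R(s) = s + a₂ s^l + o(s^l). Then the composition P = D₁ ∘ R ∘ D₂ satisfies s − P(s) = −a₂ 2^{−l} s^{2l−1} + o(s^{2l−1}); in particular s − P(s) ∼ s^{2l−1}. (This is the asymptotics of the Poincaré map on a transversal through the saddle vertex for a saddle loop of even codimension 2l: for even codimension k' = 2l one gets s − P(s) ∼ s^{k'−1}.) -/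
open Filter Real Set

/-!
Work with little-o expansions on `𝓝[>] 0`. Since `l < k`, the logarithmic terms of both
Dulac maps are negligible at the orders that matter: `D₂ s = s²/2 + o(s^{2l})` and
`D₁ t = √2 √t + o(t^{l-1/2})`. Composing with `R` gives
`v := R (D₂ s) = s²/2 + a₂ 2^{-l} s^{2l} + o(s^{2l})`, so `v ∼ s²/2`. Finally
`√2 √v - s = (2v - s²) / (√2 √v + s)` with denominator `∼ 2s`, and the remainder of `D₁`
at `v` is `o(v^{l-1/2}) = o(s^{2l-1})`, so `D₁ v = s + a₂ 2^{-l} s^{2l-1} + o(s^{2l-1})`.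
-/

open Asymptotics Topology

section LittleO

variable {α 𝕜 : Type*} [NormedField 𝕜] {l : Filter α} {f g : α → 𝕜} {c : 𝕜}

theorem isLittleO_sub_const_mul_iff_tendsto_div (hg : ∀ᶠ x in l, g x ≠ 0) :
    (fun x => f x - c * g x) =o[l] g ↔ Tendsto (fun x => f x / g x) l (𝓝 c) := by
  have hdiv : (fun x => (f x - c * g x) / g x) =ᶠ[l] fun x => f x / g x - c :=
    hg.mono fun x hx => by field_simp
  rw [isLittleO_iff_tendsto' (hg.mono fun _ hx h0 => absurd h0 hx), tendsto_congr' hdiv,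
    ← sub_self c]
  exact tendsto_sub_const_iff c

theorem isBigO_of_isLittleO_sub_const_mul (h : (fun x => f x - c * g x) =o[l] g) : f =O[l] g :=
  (h.isBigO.add (isBigO_const_mul_self c g l)).congr_left fun _ => sub_add_cancel _ _

theorem isBigO_of_tendsto_sub_const_mul_div (hg : ∀ᶠ x in l, g x ≠ 0)
    (h : Tendsto (fun x => (f x - c * g x) / g x) l (𝓝 0)) : f =O[l] g :=
  isBigO_of_isLittleO_sub_const_mul <|
    isLittleO_of_tendsto' (hg.mono fun _ hx h0 => absurd h0 hx) h

end LittleO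

section NearZero

theorem isBigO_pow_pow_nhds_zero {m n : ℕ} (h : m ≤ n) :
    (fun x : ℝ => x ^ n) =O[𝓝 0] fun x => x ^ m := by
  refine IsBigO.of_bound 1 ?_
  filter_upwards [Metric.closedBall_mem_nhds (0 : ℝ) one_pos] with x hx
  rw [Metric.mem_closedBall, dist_zero_right] at hx
  simpa [norm_pow] using pow_le_pow_of_le_one (norm_nonneg x) hx h

theorem isLittleO_rpow_mul_neg_log {p q : ℝ} (h : p < q) :
    (fun t => t ^ q * -log t) =o[𝓝[>] 0] fun t => t ^ p := by
  refine isLittleO_of_tendsto' (eventually_of_mem self_mem_nhdsWithin fun t ht h0 =>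
    absurd h0 (rpow_pos_of_pos ht p).ne') ?_
  have hlim := (tendsto_log_mul_rpow_nhdsGT_zero (sub_pos.2 h)).neg
  rw [neg_zero] at hlim
  refine hlim.congr' (eventually_of_mem self_mem_nhdsWithin fun t (ht : 0 < t) => ?_)
  rw [rpow_sub ht]
  field_simp

theorem isLittleO_rpow_of_neg_log_expansion {f : ℝ → ℝ} {c p q : ℝ} (hpq : p < q)
    (h : Tendsto (fun t => (f t - c * (t ^ q * -log t)) / (t ^ q * -log t)) (𝓝[>] 0) (𝓝 0)) :
    f =o[𝓝[>] 0] fun t => t ^ p := by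
  have hne : ∀ᶠ t in 𝓝[>] (0 : ℝ), t ^ q * -log t ≠ 0 := by
    filter_upwards [Ioo_mem_nhdsGT one_pos] with t ht
    exact (mul_pos (rpow_pos_of_pos ht.1 q) (neg_pos.2 (log_neg ht.1 ht.2))).ne'
  exact (isBigO_of_tendsto_sub_const_mul_div hne h).trans_isLittleO
    (isLittleO_rpow_mul_neg_log hpq)

theorem isEquivalent_half_sq_of_isLittleO {u : ℝ → ℝ}
    (h : (fun s => u s - s ^ 2 / 2) =o[𝓝[>] 0] fun s => s ^ 2) :
    u ~[𝓝[>] 0] fun s => s ^ 2 / 2 :=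
  h.trans_isBigO <| (isBigO_self_const_mul (inv_ne_zero two_ne_zero) _ _).congr_right
    fun s => by ring

theorem Asymptotics.IsEquivalent.tendsto_nhdsGT_of_half_sq {u : ℝ → ℝ}
    (h : u ~[𝓝[>] 0] fun s => s ^ 2 / 2) : Tendsto u (𝓝[>] 0) (𝓝[>] 0) := by
  have hsq : Tendsto (fun s : ℝ => s ^ 2 / 2) (𝓝[>] 0) (𝓝 0) := by
    simpa using (((continuous_pow 2).div_const (2 : ℝ)).tendsto 0).mono_left nhdsWithin_le_nhds
  refine tendsto_nhdsWithin_iff.2 ⟨h.symm.tendsto_nhds hsq, h.eventually_pos ?_⟩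
  filter_upwards [self_mem_nhdsWithin] with s (hs : 0 < s)
  positivity

end NearZero

section Transitions

variable {l : ℕ}

theorem regular_comp_expansion {D R : ℝ → ℝ} {a : ℝ} (hl : 1 ≤ l)
    (hD : (fun s => D s - s ^ 2 / 2) =o[𝓝[>] 0] fun s => s ^ (2 * l))
    (hR : (fun t => R t - t - a * t ^ l) =o[𝓝[>] 0] fun t => t ^ l) :
    (fun s => R (D s) - s ^ 2 / 2 - a / 2 ^ l * s ^ (2 * l)) =o[𝓝[>] 0]
      fun s => s ^ (2 * l) := by
  have hDeq : D ~[𝓝[>] 0] fun s => s ^ 2 / 2 := isEquivalent_half_sq_of_isLittleO <|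
    hD.trans_isBigO ((isBigO_pow_pow_nhds_zero (by omega)).mono nhdsWithin_le_nhds)
  have hpow : (fun s : ℝ => (s ^ 2 / 2) ^ l) =O[𝓝[>] 0] fun s => s ^ (2 * l) :=
    (isBigO_const_mul_self (2 ^ l)⁻¹ _ _).congr_left fun s => by
      rw [div_pow, ← pow_mul]; ring
  have hDl : (D ^ l - fun s => (s ^ 2 / 2) ^ l) =o[𝓝[>] 0] fun s => s ^ (2 * l) :=
    (hDeq.pow l).isLittleO.trans_isBigO hpow
  have hRD : (fun s => R (D s) - D s - a * D s ^ l) =o[𝓝[>] 0] fun s => s ^ (2 * l) :=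
    (hR.comp_tendsto hDeq.tendsto_nhdsGT_of_half_sq).trans_isBigO
      ((hDeq.pow l).isBigO.trans hpow)
  refine ((hRD.add hD).add (hDl.const_mul_left a)).congr_left fun s => ?_
  simp only [Pi.sub_apply, Pi.pow_apply]
  rw [div_pow, ← pow_mul]
  ring

theorem isEquivalent_half_sq_of_expansion {v : ℝ → ℝ} {b : ℝ} (hl : 2 ≤ l)
    (hv : (fun s => v s - s ^ 2 / 2 - b * s ^ (2 * l)) =o[𝓝[>] 0] fun s => s ^ (2 * l)) :
    v ~[𝓝[>] 0] fun s => s ^ 2 / 2 :=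
  isEquivalent_half_sq_of_isLittleO <| (isBigO_of_isLittleO_sub_const_mul hv).trans_isLittleO
    ((isLittleO_pow_pow (by omega)).mono nhdsWithin_le_nhds)

theorem sqrt_two_mul_sqrt_expansion {v : ℝ → ℝ} {b : ℝ} (hl : 2 ≤ l)
    (hv : (fun s => v s - s ^ 2 / 2 - b * s ^ (2 * l)) =o[𝓝[>] 0] fun s => s ^ (2 * l)) :
    (fun s => √2 * √(v s) - s - b * s ^ (2 * l - 1)) =o[𝓝[>] 0] fun s => s ^ (2 * l - 1) := by
  have hveq := isEquivalent_half_sq_of_expansion hl hv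
  have hpos : ∀ᶠ s in 𝓝[>] (0 : ℝ), 0 < s := self_mem_nhdsWithin
  have hvpos : ∀ᶠ s in 𝓝[>] 0, 0 < v s := hveq.tendsto_nhdsGT_of_half_sq self_mem_nhdsWithin
  have hroot : Tendsto (fun s => √2 * √(v s) / s) (𝓝[>] 0) (𝓝 1) := by
    have hratio := (isEquivalent_iff_tendsto_one (hpos.mono fun s hs => by positivity)).1 hveq
    have hsqrt := (continuous_sqrt.tendsto 1).comp hratio
    rw [sqrt_one] at hsqrt
    refine hsqrt.congr' (hpos.mono fun s hs => ?_)
    rw [Function.comp_apply, Pi.div_apply, div_div_eq_mul_div, sqrt_div' _ (sq_nonneg s),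
      sqrt_mul' _ zero_le_two, sqrt_sq hs.le, mul_comm]
  have hfrac : Tendsto (fun s => s / (√2 * √(v s) + s)) (𝓝[>] 0) (𝓝 (1 / 2)) := by
    have hden := hroot.add_const 1
    rw [one_add_one_eq_two] at hden
    refine (tendsto_const_nhds.div hden two_ne_zero).congr' (hpos.mono fun s hs => ?_)
    simp only [Pi.div_apply]
    field_simp
  have hnum : Tendsto (fun s => (2 * v s - s ^ 2) / s ^ (2 * l)) (𝓝[>] 0) (𝓝 (2 * b)) := by
    have h := ((isLittleO_sub_const_mul_iff_tendsto_div (hpos.mono fun s hs => by positivity)).1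
      hv).const_mul 2
    exact h.congr fun s => by ring
  have hquot : Tendsto (fun s => (√2 * √(v s) - s) / s ^ (2 * l - 1)) (𝓝[>] 0) (𝓝 b) := by
    have h := hnum.mul hfrac
    rw [show 2 * b * (1 / 2) = b by ring] at h
    refine h.congr' ((hpos.and hvpos).mono fun s ⟨hs, hvs⟩ => ?_)
    have hsq : (√2 * √(v s)) ^ 2 = 2 * v s := by
      rw [mul_pow, sq_sqrt zero_le_two, sq_sqrt hvs.le]
    have hden : 0 < √2 * √(v s) + s := by positivity
    have hsl : s ^ (2 * l) = s ^ (2 * l - 1) * s := by rw [← pow_succ]; congr 1; omega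
    rw [hsl]
    field_simp
    linear_combination -hsq
  exact (isLittleO_sub_const_mul_iff_tendsto_div (hpos.mono fun s hs => by positivity)).2 hquot

theorem dulac_comp_expansion {D v : ℝ → ℝ} {b : ℝ} (hl : 2 ≤ l)
    (hD : (fun t => D t - √2 * √t) =o[𝓝[>] 0] fun t => t ^ ((l : ℝ) - 1 / 2))
    (hv : (fun s => v s - s ^ 2 / 2 - b * s ^ (2 * l)) =o[𝓝[>] 0] fun s => s ^ (2 * l)) :
    (fun s => D (v s) - s - b * s ^ (2 * l - 1)) =o[𝓝[>] 0] fun s => s ^ (2 * l - 1) := by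
  have hveq := isEquivalent_half_sq_of_expansion hl hv
  have hvO : v =O[𝓝[>] 0] fun s => s ^ 2 :=
    hveq.isBigO.trans ((isBigO_const_mul_self 2⁻¹ _ _).congr_left fun s => by ring)
  have hexp : (fun s : ℝ => (s ^ 2) ^ ((l : ℝ) - 1 / 2)) =ᶠ[𝓝[>] 0]
      fun s => s ^ (2 * l - 1) := by
    filter_upwards [self_mem_nhdsWithin] with s (hs : 0 < s)
    have hcast : ((2 * l - 1 : ℕ) : ℝ) = 2 * ((l : ℝ) - 1 / 2) := by
      rw [Nat.cast_sub (by omega)]; push_cast; ring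
    rw [← rpow_natCast s (2 * l - 1), hcast, rpow_mul hs.le, ← rpow_natCast s 2, Nat.cast_ofNat]
  have hr : (0 : ℝ) ≤ l - 1 / 2 := by linarith [show (2 : ℝ) ≤ l by exact_mod_cast hl]
  have hrem : (fun s => D (v s) - √2 * √(v s)) =o[𝓝[>] 0] fun s => s ^ (2 * l - 1) :=
    (hD.comp_tendsto hveq.tendsto_nhdsGT_of_half_sq).trans_isBigO <|
      (hvO.rpow hr (Eventually.of_forall fun s => sq_nonneg s)).trans_eventuallyEq hexp
  exact (hrem.add (sqrt_two_mul_sqrt_expansion hl hv)).congr_left fun s => by ring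

end Transitions

theorem poincare_through_vertex_even_codim_general
    (k l : ℕ) (hl : 2 ≤ l) (hlk : l < k) (a a₂ : ℝ) (ha₂ : a₂ ≠ 0)
    (D₁ D₂ R : ℝ → ℝ)
    (hD₂ : Tendsto
      (fun s : ℝ => (D₂ s - s ^ 2 / 2 - (a / 2 ^ k) * s ^ (2 * k) * (-Real.log s)) /
        (s ^ (2 * k) * (-Real.log s)))
      (nhdsWithin 0 (Set.Ioi 0)) (nhds 0))
    (hD₁ : Tendsto
      (fun s : ℝ => (D₁ s - Real.sqrt 2 * s ^ ((1:ℝ)/2)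
          - (a / (2 * Real.sqrt 2)) * s ^ ((k:ℝ) - 1/2) * (-Real.log s)) /
        (s ^ ((k:ℝ) - 1/2) * (-Real.log s)))
      (nhdsWithin 0 (Set.Ioi 0)) (nhds 0))
    (hR : Tendsto (fun s : ℝ => (R s - s - a₂ * s ^ l) / s ^ l)
      (nhdsWithin 0 (Set.Ioi 0)) (nhds 0)) :
    Tendsto
      (fun s : ℝ => (s - D₁ (R (D₂ s)) - (-a₂ * 2 ^ (-(l:ℝ)) * s ^ (2 * l - 1))) /
        s ^ (2 * l - 1))
      (nhdsWithin 0 (Set.Ioi 0)) (nhds 0) ∧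
    (∃ L : ℝ, L ≠ 0 ∧ Tendsto (fun s : ℝ => (s - D₁ (R (D₂ s))) / s ^ (2 * l - 1))
      (nhdsWithin 0 (Set.Ioi 0)) (nhds L)) := by
  have hpos : ∀ᶠ s in 𝓝[>] (0 : ℝ), 0 < s := self_mem_nhdsWithin
  have hD₂' : (fun s => D₂ s - s ^ 2 / 2) =o[𝓝[>] 0] fun s => s ^ (2 * l) := by
    simpa only [rpow_natCast] using isLittleO_rpow_of_neg_log_expansion
      (f := fun s => D₂ s - s ^ 2 / 2) (p := (2 * l : ℕ)) (q := (2 * k : ℕ))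
      (by exact_mod_cast (by omega : 2 * l < 2 * k))
      (by simpa only [rpow_natCast, mul_assoc] using hD₂)
  have hD₁' : (fun t => D₁ t - √2 * √t) =o[𝓝[>] 0] fun t => t ^ ((l : ℝ) - 1 / 2) :=
    (isLittleO_rpow_of_neg_log_expansion (f := fun t => D₁ t - √2 * t ^ ((1 : ℝ) / 2))
      (q := (k : ℝ) - 1 / 2)      (by linarith [show (l : ℝ) < k by exact_mod_cast hlk])
      (by simpa only [mul_assoc] using hD₁)).congr_left fun t => by rw [sqrt_eq_rpow t]
  have hR' : (fun t => R t - t - a₂ * t ^ l) =o[𝓝[>] 0] fun t => t ^ l :=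
    isLittleO_of_tendsto' (hpos.mono fun t ht h0 => absurd h0 (by positivity)) hR
  have hP := dulac_comp_expansion hl hD₁' (regular_comp_expansion (by omega) hD₂' hR')
  have hgap : (fun s => s - D₁ (R (D₂ s)) - (-a₂ * 2 ^ (-(l:ℝ))) * s ^ (2 * l - 1))
      =o[𝓝[>] 0] fun s => s ^ (2 * l - 1) := by
    rw [rpow_neg zero_le_two, rpow_natCast]
    exact hP.neg_left.congr_left fun s => by ring
  refine ⟨hgap.tendsto_div_nhds_zero, -a₂ * 2 ^ (-(l:ℝ)),
    mul_ne_zero (neg_ne_zero.2 ha₂) (by positivity), ?_⟩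
  exact (isLittleO_sub_const_mul_iff_tendsto_div (hpos.mono fun s hs => by positivity)).1 hgap

/-- Asymptotics of the Poincaré map on a transversal through the saddle vertex
for a saddle loop of even codimension `2l` (`2 ≤ l < k`, `a₂ ≠ 0`).
With `D₂(s) = s²/2 + (a/2^k) s^{2k}(−log s) + o(s^{2k}(−log s))`,
`D₁(s) = √2 s^{1/2} + (a/(2√2)) s^{k−1/2}(−log s) + o(s^{k−1/2}(−log s))`, and
`R(s) = s + a₂ s^l + o(s^l)`, the composition `P = D₁ ∘ R ∘ D₂` satisfies
`s − P(s) = −a₂ 2^{−l} s^{2l−1} + o(s^{2l−1})`; in particular `s − P(s) ∼ s^{2l−1}`. -/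
theorem poincare_through_vertex_even_codim
    (k l : ℕ) (hl : 2 ≤ l) (hlk : l < k) (a a₂ : ℝ) (ha₂ : a₂ ≠ 0)
    (δ : ℝ) (hδ : 0 < δ) (D₁ D₂ R : ℝ → ℝ)
    (hD₁pos : ∀ s ∈ Set.Ioo (0:ℝ) δ, 0 < D₁ s)
    (hD₂pos : ∀ s ∈ Set.Ioo (0:ℝ) δ, 0 < D₂ s)
    (hRpos : ∀ s ∈ Set.Ioo (0:ℝ) δ, 0 < R s)
    (hD₂ : Tendsto
      (fun s : ℝ => (D₂ s - s ^ 2 / 2 - (a / 2 ^ k) * s ^ (2 * k) * (-Real.log s)) /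
        (s ^ (2 * k) * (-Real.log s)))
      (nhdsWithin 0 (Set.Ioi 0)) (nhds 0))
    (hD₁ : Tendsto
      (fun s : ℝ => (D₁ s - Real.sqrt 2 * s ^ ((1:ℝ)/2)
          - (a / (2 * Real.sqrt 2)) * s ^ ((k:ℝ) - 1/2) * (-Real.log s)) /
        (s ^ ((k:ℝ) - 1/2) * (-Real.log s)))
      (nhdsWithin 0 (Set.Ioi 0)) (nhds 0))
    (hR : Tendsto (fun s : ℝ => (R s - s - a₂ * s ^ l) / s ^ l)
      (nhdsWithin 0 (Set.Ioi 0)) (nhds 0)) :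
    Tendsto
      (fun s : ℝ => (s - D₁ (R (D₂ s)) - (-a₂ * 2 ^ (-(l:ℝ)) * s ^ (2 * l - 1))) /
        s ^ (2 * l - 1))
      (nhdsWithin 0 (Set.Ioi 0)) (nhds 0) ∧
    (∃ L : ℝ, L ≠ 0 ∧ Tendsto (fun s : ℝ => (s - D₁ (R (D₂ s))) / s ^ (2 * l - 1))
      (nhdsWithin 0 (Set.Ioi 0)) (nhds L)) :=
  poincare_through_vertex_even_codim_general k l hl hlk a a₂ ha₂ D₁ D₂ R hD₂ hD₁ hR
end

section
/- Let p, q ≥ 1 be integers, N ≥ 2 an integer, and for each i = 2, …, N let g_i : ℝ → ℝ be a real polynomial of degree at most i − 1. Define G(y) = (1/q)·y^{q+1}·g₂(−(q/p)·log|y|) for y ≠ 0 and G(0) = 0 if p = 1, and G ≡ 0 if p > 1. Then there exists δ ∈ (0,1) such that the map F defined on (−δ,δ)² by F(x,y) = ( x, y·(1 + Σ_{i=2}^{N} g_i(−(q/p)·log|y|)·x^{p(i−1)}·y^{q(i−1)})^{1/q} ) for xy ≠ 0, and extended by F(x,0) = (x,0) and F(0,y) = (0,y), is well defined (the expression under the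 q-th root is positive) and continuously differentiable on (−δ,δ)², with differential DF(x,0) equal to the identity matrix for all x, and DF(0,y) equal to the lower-triangular matrix with diagonal entries 1, upper-right entry 0, and lower-left entry G(y). In particular DF(0,0) is the identity, so F is a local C¹-diffeomorphism at the origin, it fixes both coordinate axes pointwise in the first component sense (maps axes to axes), and maps each quadrant into itself. -/
open Filter Set Real Polynomial Topology

/-- Polynomial in `c * log y` times `y ^ n` tends to `0` at `0`. -/
lemma aux_tendsto_eval_log_pow (P : Polynomial ℝ) (c : ℝ) (n : ℕ) (hn : 1 ≤ n) :
    Tendsto (fun y : ℝ => P.eval (c * Real.log y) * y ^ n) (𝓝[≠] (0:ℝ)) (𝓝 0) := by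
  set Q : Polynomial ℝ := P.comp (Polynomial.C (-c) * Polynomial.X) with hQdef
  have hQeval : ∀ s : ℝ, Q.eval s = P.eval (-(c * s)) := by
    intro s; simp [hQdef, Polynomial.eval_comp]
  have hQ : Tendsto (fun s : ℝ => |Q.eval s / Real.exp s|) atTop (𝓝 0) := by
    simpa using (Q.tendsto_div_exp_atTop).abs
  have hΦ : Tendsto (fun s : ℝ => |P.eval (-(c * s))| * Real.exp (-s) ^ n) atTop (𝓝 0) := by
    apply squeeze_zero' (by filter_upwards with s; positivity)
    · filter_upwards [eventually_ge_atTop (0:ℝ)] with s hs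
      have h2 : Real.exp (-s) ≤ 1 := Real.exp_le_one_iff.mpr (by linarith)
      have h1 : Real.exp (-s) ^ n ≤ Real.exp (-s) := by
        calc Real.exp (-s) ^ n ≤ Real.exp (-s) ^ 1 :=
              pow_le_pow_of_le_one (Real.exp_nonneg _) h2 hn
          _ = Real.exp (-s) := pow_one _
      calc |P.eval (-(c*s))| * Real.exp (-s) ^ n ≤ |P.eval (-(c*s))| * Real.exp (-s) :=
            mul_le_mul_of_nonneg_left h1 (abs_nonneg _)
        _ = |Q.eval s / Real.exp s| := by
            rw [abs_div, abs_of_pos (Real.exp_pos s), Real.exp_neg, hQeval,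
              div_eq_mul_inv]
    · exact hQ
  have hlog : Tendsto (fun y : ℝ => -Real.log y) (𝓝[≠] (0:ℝ)) atTop :=
    tendsto_neg_atBot_atTop.comp Real.tendsto_log_nhdsNE_zero
  apply squeeze_zero_norm' (f := fun y : ℝ => P.eval (c * Real.log y) * y ^ n)
    (a := fun y : ℝ => |P.eval (-(c * (-Real.log y)))| * Real.exp (-(-Real.log y)) ^ n)
  · filter_upwards [self_mem_nhdsWithin] with y (hy : y ≠ 0)
    have h1 : Real.exp (Real.log y) = |y| := Real.exp_log_eq_abs hy
    rw [Real.norm_eq_abs, abs_mul, abs_pow, neg_neg, h1]; ring_nf; exact le_refl _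
  · exact hΦ.comp hlog

/-- The function `y ↦ P(c log y) y^n` is continuous on all of `ℝ` for `n ≥ 1`. -/
lemma aux_cont_eval_log_pow (P : Polynomial ℝ) (c : ℝ) (n : ℕ) (hn : 1 ≤ n) :
    Continuous (fun y : ℝ => P.eval (c * Real.log y) * y ^ n) := by
  rw [continuous_iff_continuousAt]
  intro y₀
  rcases eq_or_ne y₀ 0 with rfl | hy₀
  · apply continuousWithinAt_compl_self.mp
    unfold ContinuousWithinAt
    have h0 : P.eval (c * Real.log 0) * (0:ℝ) ^ n = 0 := by
      rw [zero_pow (by omega), mul_zero]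
    simp only [h0]
    exact aux_tendsto_eval_log_pow P c n hn
  · exact ((Polynomial.continuousAt P).comp ((continuousAt_const).mul
      (Real.continuousAt_log hy₀))).mul (continuousAt_pow _ _)

/-- Derivative of `y ↦ P(c log y) y^n` away from `0`. -/
lemma aux_hasDerivAt_eval_log_pow (P : Polynomial ℝ) (c : ℝ) (n : ℕ) (hn : 1 ≤ n)
    {y : ℝ} (hy : y ≠ 0) :
    HasDerivAt (fun y : ℝ => P.eval (c * Real.log y) * y ^ n)
      ((c * P.derivative.eval (c * Real.log y) + n * P.eval (c * Real.log y)) * y ^ (n - 1))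
      y := by
  obtain ⟨m, rfl⟩ : ∃ m, n = m + 1 := ⟨n - 1, (Nat.succ_pred_eq_of_pos hn).symm⟩
  have h1 : HasDerivAt (fun y : ℝ => c * Real.log y) (c * y⁻¹) y :=
    (Real.hasDerivAt_log hy).const_mul c
  have h2 : HasDerivAt (fun y : ℝ => P.eval (c * Real.log y))
      (P.derivative.eval (c * Real.log y) * (c * y⁻¹)) y :=
    (P.hasDerivAt (c * Real.log y)).comp (h₂ := fun x => P.eval x) y h1
  have h3 : HasDerivAt (fun y : ℝ => y ^ (m + 1)) ((m + 1) * y ^ m) y := by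
    simpa using hasDerivAt_pow (m + 1) y
  have h4 := h2.fun_mul h3
  refine h4.congr_deriv ?_
  simp only [Nat.add_sub_cancel]
  field_simp
  push_cast
  ring

/-- `|t^a - 1| ≤ |t - 1|` for `t > 0` and `0 < a ≤ 1`. -/
lemma aux_abs_rpow_sub_one {t a : ℝ} (ht : 0 < t) (ha0 : 0 < a) (ha1 : a ≤ 1) :
    |t ^ a - 1| ≤ |t - 1| := by
  rcases le_total 1 t with h1 | h1
  · have hu : t ^ a ≤ t := by
      calc t ^ a ≤ t ^ (1:ℝ) := Real.rpow_le_rpow_of_exponent_le h1 ha1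
        _ = t := Real.rpow_one t
    have hl : 1 ≤ t ^ a := Real.one_le_rpow h1 ha0.le
    rw [abs_of_nonneg (by linarith), abs_of_nonneg (by linarith)]; linarith
  · have hu : t ≤ t ^ a := by
      calc t = t ^ (1:ℝ) := (Real.rpow_one t).symm
        _ ≤ t ^ a := Real.rpow_le_rpow_of_exponent_ge ht h1 ha1
    have hl : t ^ a ≤ 1 := Real.rpow_le_one ht.le h1 ha0.le
    rw [abs_of_nonpos (by linarith), abs_of_nonpos (by linarith)]; linarith

/-- **The straightening map of a resonant hyperbolic saddle is a local
`C¹`-diffeomorphism.**  Let `p, q ≥ 1`, `N ≥ 2`, and for `i = 2, …, N` let `g i` be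
a real polynomial of degree at most `i − 1`.  Put
`B(x,y) = 1 + Σ_{i=2}^{N} g_i(−(q/p)·log|y|)·x^{p(i−1)}·y^{q(i−1)}`,
`F(x,y) = (x, y·B(x,y)^{1/q})` for `xy ≠ 0`, extended by `F(x,0) = (x,0)` and
`F(0,y) = (0,y)`, and let `G(y) = (1/q)·y^{q+1}·g₂(−(q/p)·log|y|)` for `y ≠ 0`,
`G(0) = 0`, when `p = 1`, and `G ≡ 0` when `p > 1`.  Then there is `δ ∈ (0,1)` such
that on `(−δ,δ)²` the expression `B` is positive (so `F` is well defined), `F` is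
continuously differentiable, `DF(x,0) = id`, and `DF(0,y)` is lower triangular with
unit diagonal and lower-left entry `G(y)`; in particular `DF(0,0) = id`, so `F` is
a local `C¹`-diffeomorphism at the origin, it fixes both coordinate axes pointwise
and maps each quadrant into itself. -/
theorem straightening_map_C1_diffeo
    (p q N : ℕ) (hp : 1 ≤ p) (hq : 1 ≤ q) (hN : 2 ≤ N)
    (g : ℕ → Polynomial ℝ)
    (hdeg : ∀ i, 2 ≤ i → i ≤ N → (g i).natDegree ≤ i - 1)
    (G : ℝ → ℝ)
    (hG : G = fun y : ℝ => if p = 1 then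
      (if y = 0 then 0 else
        (1 / (q : ℝ)) * y ^ (q + 1) * (g 2).eval (-((q : ℝ) / p) * Real.log |y|))
      else 0)
    (B : ℝ → ℝ → ℝ)
    (hB : B = fun x y : ℝ => 1 + ∑ i ∈ Finset.Icc 2 N,
      (g i).eval (-((q : ℝ) / p) * Real.log |y|) * x ^ (p * (i - 1)) * y ^ (q * (i - 1)))
    (F : ℝ × ℝ → ℝ × ℝ)
    (hF : F = fun pt : ℝ × ℝ =>
      (pt.1, if pt.1 = 0 ∨ pt.2 = 0 then pt.2
        else pt.2 * (B pt.1 pt.2) ^ ((1 : ℝ) / q))) :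
    ∃ δ : ℝ, 0 < δ ∧ δ < 1 ∧
      -- well-definedness: the expression under the `q`-th root is positive
      (∀ x y : ℝ, |x| < δ → |y| < δ → x * y ≠ 0 → 0 < B x y) ∧
      -- `F` is continuously differentiable on `(−δ,δ)²`
      ContDiffOn ℝ 1 F (Set.Ioo (-δ) δ ×ˢ Set.Ioo (-δ) δ) ∧
      -- `DF(x,0)` is the identity matrix
      (∀ x ∈ Set.Ioo (-δ) δ,
        HasFDerivAt F (ContinuousLinearMap.id ℝ (ℝ × ℝ)) (x, 0)) ∧
      -- `DF(0,y)` is lower triangular with unit diagonal and lower-left entry `G(y)`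
      (∀ y ∈ Set.Ioo (-δ) δ,
        HasFDerivAt F
          ((ContinuousLinearMap.fst ℝ ℝ ℝ).prod
            (G y • ContinuousLinearMap.fst ℝ ℝ ℝ + ContinuousLinearMap.snd ℝ ℝ ℝ))
          (0, y)) ∧
      -- in particular `DF(0,0) = id` (local `C¹`-diffeomorphism at the origin)
      HasFDerivAt F (ContinuousLinearMap.id ℝ (ℝ × ℝ)) (0, 0) ∧
      -- `F` fixes both coordinate axes
      (∀ x : ℝ, F (x, 0) = (x, 0)) ∧ (∀ y : ℝ, F (0, y) = (0, y)) ∧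
      -- `F` maps each quadrant into itself
      (∀ x y : ℝ, |x| < δ → |y| < δ →
        ((0 ≤ x → 0 ≤ (F (x, y)).1) ∧ (x ≤ 0 → (F (x, y)).1 ≤ 0) ∧
         (0 ≤ y → 0 ≤ (F (x, y)).2) ∧ (y ≤ 0 → (F (x, y)).2 ≤ 0))) := by
  have hq0 : (0:ℝ) < q := by exact_mod_cast hq
  set c : ℝ := -((q:ℝ)/p) with hc
  set Jf : ℕ → ℝ → ℝ :=
    fun i y => (g i).eval (c * Real.log y) * y ^ (q * (i-1)) with hJf
  have hqi : ∀ i, 2 ≤ i → 1 ≤ q * (i-1) := fun i hi => by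
    have : 1 ≤ i - 1 := by omega
    calc 1 = 1 * 1 := by ring
    _ ≤ q * (i-1) := Nat.mul_le_mul hq this
  have hpi : ∀ i, 2 ≤ i → 1 ≤ p * (i-1) := fun i hi => by
    have : 1 ≤ i - 1 := by omega
    calc 1 = 1 * 1 := by ring
    _ ≤ p * (i-1) := Nat.mul_le_mul hp this
  have hBeq : ∀ x y : ℝ, B x y = 1 + ∑ i ∈ Finset.Icc 2 N, x ^ (p*(i-1)) * Jf i y := by
    intro x y
    rw [hB]
    simp only [hJf]
    congr 1
    refine Finset.sum_congr rfl fun i hi => ?_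
    rw [Real.log_abs]
    ring
  have hJ0 : ∀ i, 2 ≤ i → Jf i 0 = 0 := by
    intro i hi
    simp only [hJf]
    rw [zero_pow (by have := hqi i hi; omega), mul_zero]
  have hB0 : ∀ x, B x 0 = 1 := by
    intro x
    rw [hBeq]
    rw [Finset.sum_eq_zero fun i hi => by
      rw [hJ0 i (Finset.mem_Icc.mp hi).1, mul_zero]]
    ring
  have hB0' : ∀ y, B 0 y = 1 := by
    intro y
    rw [hBeq]
    rw [Finset.sum_eq_zero fun i hi => by
      rw [zero_pow (by have := hpi i (Finset.mem_Icc.mp hi).1; omega), zero_mul]]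
    ring
  have hJcont : ∀ i, 2 ≤ i → Continuous (Jf i) := by
    intro i hi
    exact aux_cont_eval_log_pow (g i) c _ (hqi i hi)
  -- the sum of absolute values, and the choice of δ
  set Sa : ℝ → ℝ := fun y => ∑ i ∈ Finset.Icc 2 N, |Jf i y| with hSa
  have hSacont : Continuous Sa := by
    apply continuous_finset_sum
    intro i hi
    exact (hJcont i (Finset.mem_Icc.mp hi).1).abs
  have hSa0 : Sa 0 = 0 := by
    apply Finset.sum_eq_zero
    intro i hi
    rw [hJ0 i (Finset.mem_Icc.mp hi).1, abs_zero]
  have hSasmall : ∀ ε : ℝ, 0 < ε → ∃ η > 0, ∀ t : ℝ, |t| < η → Sa t < ε := by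
    intro ε hε
    have h := Metric.continuousAt_iff.mp (hSacont.continuousAt : ContinuousAt Sa 0) ε hε
    obtain ⟨η, hη, h⟩ := h
    refine ⟨η, hη, fun t ht => ?_⟩
    have := h (x := t) (by simpa [Real.dist_eq] using ht)
    rw [Real.dist_eq, hSa0, sub_zero] at this
    exact lt_of_le_of_lt (le_abs_self _) this
  obtain ⟨η₀, hη₀, hη₀small⟩ := hSasmall (1/2) (by norm_num)
  set δ : ℝ := min η₀ (1/2) with hδ
  have hδpos : 0 < δ := lt_min hη₀ (by norm_num)
  have hδlt1 : δ < 1 := lt_of_le_of_lt (min_le_right _ _) (by norm_num)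
  have hsub : ∀ x y : ℝ, |x| ≤ 1 → |B x y - 1| ≤ Sa y := by
    intro x y hx
    rw [hBeq, add_sub_cancel_left]
    calc |∑ i ∈ Finset.Icc 2 N, x ^ (p*(i-1)) * Jf i y|
        ≤ ∑ i ∈ Finset.Icc 2 N, |x ^ (p*(i-1)) * Jf i y| := Finset.abs_sum_le_sum_abs _ _
      _ ≤ ∑ i ∈ Finset.Icc 2 N, |Jf i y| := by
          apply Finset.sum_le_sum
          intro i hi
          rw [abs_mul, abs_pow]
          calc |x| ^ (p*(i-1)) * |Jf i y| ≤ 1 * |Jf i y| := by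
                apply mul_le_mul_of_nonneg_right _ (abs_nonneg _)
                exact pow_le_one₀ (abs_nonneg x) hx
            _ = |Jf i y| := one_mul _
  have hBge : ∀ x y : ℝ, |x| < δ → |y| < δ → (1:ℝ)/2 ≤ B x y := by
    intro x y hx hy
    have h1 : |B x y - 1| ≤ Sa y := hsub x y (le_of_lt (lt_of_lt_of_le hx (le_of_lt hδlt1)))
    have h2 : Sa y < 1/2 := hη₀small y (lt_of_lt_of_le hy (min_le_left _ _))
    have := abs_le.mp (le_of_lt (lt_of_le_of_lt h1 h2))
    linarith [this.1]
  have hBpos : ∀ x y : ℝ, |x| < δ → |y| < δ → 0 < B x y := by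
    intro x y hx hy
    linarith [hBge x y hx hy]
  -- F equals the global formula
  have hFeq : F = fun z : ℝ × ℝ => (z.1, z.2 * (B z.1 z.2) ^ ((1:ℝ)/q)) := by
    funext z
    rw [hF]
    simp only
    split_ifs with h
    · rcases h with h | h
      · rw [show B z.1 z.2 = 1 by rw [h]; exact hB0' z.2, Real.one_rpow, mul_one]
      · rw [show B z.1 z.2 = 1 by rw [h]; exact hB0 z.1, Real.one_rpow, mul_one, h]
    · rfl
  -- the candidate derivative entries
  set Af : ℝ × ℝ → ℝ := fun z => (1/(q:ℝ)) * (B z.1 z.2) ^ ((1:ℝ)/q - 1) *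
    ∑ i ∈ Finset.Icc 2 N, ((p*(i-1) : ℕ) : ℝ) * z.1 ^ (p*(i-1) - 1) *
      ((g i).eval (c * Real.log z.2) * z.2 ^ (q*(i-1) + 1)) with hAf
  set Cf : ℝ × ℝ → ℝ := fun z => (B z.1 z.2) ^ ((1:ℝ)/q) +
    (1/(q:ℝ)) * (B z.1 z.2) ^ ((1:ℝ)/q - 1) *
    ∑ i ∈ Finset.Icc 2 N, z.1 ^ (p*(i-1)) *
      ((c * (g i).derivative.eval (c * Real.log z.2)
        + ((q*(i-1) : ℕ) : ℝ) * (g i).eval (c * Real.log z.2)) * z.2 ^ (q*(i-1))) with hCf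
  set Dmap : ℝ × ℝ → (ℝ × ℝ →L[ℝ] ℝ × ℝ) := fun z =>
    (ContinuousLinearMap.fst ℝ ℝ ℝ).prod
      (Af z • ContinuousLinearMap.fst ℝ ℝ ℝ + Cf z • ContinuousLinearMap.snd ℝ ℝ ℝ) with hD
  have hAf0 : ∀ x : ℝ, Af (x, 0) = 0 := by
    intro x
    simp only [hAf]
    rw [Finset.sum_eq_zero fun i hi => by
      rw [show ((0:ℝ) ^ (q*(i-1) + 1)) = 0 from zero_pow (by omega)]; ring]
    ring
  have hCf0 : ∀ x : ℝ, Cf (x, 0) = 1 := by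
    intro x
    simp only [hCf]
    rw [hB0, Finset.sum_eq_zero fun i hi => by
      rw [show ((0:ℝ) ^ (q*(i-1))) = 0 from
        zero_pow (by have := hqi i (Finset.mem_Icc.mp hi).1; omega)]; ring]
    rw [Real.one_rpow]
    ring
  have hCf0' : ∀ y : ℝ, Cf (0, y) = 1 := by
    intro y
    simp only [hCf]
    rw [hB0', Finset.sum_eq_zero fun i hi => by
      rw [show ((0:ℝ) ^ (p*(i-1))) = 0 from
        zero_pow (by have := hpi i (Finset.mem_Icc.mp hi).1; omega)]; ring]
    rw [Real.one_rpow]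
    ring
  have hAf0' : ∀ y : ℝ, Af (0, y) = G y := by
    intro y
    simp only [hAf]
    rw [hB0', Real.one_rpow]
    rcases eq_or_ne p 1 with hp1 | hp1
    · have hsum : ∑ i ∈ Finset.Icc 2 N, ((p*(i-1) : ℕ) : ℝ) * (0:ℝ) ^ (p*(i-1) - 1) *
          ((g i).eval (c * Real.log y) * y ^ (q*(i-1) + 1))
          = (g 2).eval (c * Real.log y) * y ^ (q + 1) := by
        rw [Finset.sum_eq_single 2]
        · rw [hp1]; norm_num
        · intro i hi hne
          have h2 : 2 ≤ i := (Finset.mem_Icc.mp hi).1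
          rw [show ((0:ℝ) ^ (p*(i-1) - 1)) = 0 from zero_pow (by
            subst hp1; omega)]
          ring
        · intro h; exact absurd (Finset.mem_Icc.mpr ⟨le_refl 2, hN⟩) h
      rw [hsum, hG]
      simp only [hp1, if_true]
      rcases eq_or_ne y 0 with rfl | hy
      · rw [show ((0:ℝ) ^ (q + 1)) = 0 from zero_pow (by omega)]
        simp
      · rw [if_neg hy, Real.log_abs]
        ring
    · have hsum : ∑ i ∈ Finset.Icc 2 N, ((p*(i-1) : ℕ) : ℝ) * (0:ℝ) ^ (p*(i-1) - 1) *
          ((g i).eval (c * Real.log y) * y ^ (q*(i-1) + 1)) = 0 := by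
        apply Finset.sum_eq_zero
        intro i hi
        have h2 : 2 ≤ i := (Finset.mem_Icc.mp hi).1
        rw [show ((0:ℝ) ^ (p*(i-1) - 1)) = 0 from zero_pow (by
          have h3 : 2 ≤ p := by omega
          have : 2 * 1 ≤ p * (i-1) := Nat.mul_le_mul h3 (by omega)
          omega)]
        ring
      rw [hsum, hG]
      simp only [hp1, if_false]
      ring
  -- derivative at points on the x-axis: the identity
  have key0 : ∀ x₀ : ℝ, |x₀| < δ →
      HasFDerivAt F (ContinuousLinearMap.id ℝ (ℝ × ℝ)) (x₀, 0) := by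
    intro x₀ hx₀
    rw [hasFDerivAt_iff_isLittleO_nhds_zero, Asymptotics.isLittleO_iff]
    intro ε hε
    obtain ⟨η, hη, hηs⟩ := hSasmall ε hε
    set r : ℝ := min (δ - |x₀|) (min η δ) with hr
    have hrpos : 0 < r := by
      apply lt_min (by linarith) (lt_min hη hδpos)
    filter_upwards [Metric.ball_mem_nhds (0 : ℝ × ℝ) hrpos] with h hh
    rw [Metric.mem_ball, dist_zero_right] at hh
    have hh1 : |h.1| < r := lt_of_le_of_lt (norm_fst_le h) hh
    have hh2 : |h.2| < r := lt_of_le_of_lt (norm_snd_le h) hh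
    have hx : |x₀ + h.1| < δ := by
      calc |x₀ + h.1| ≤ |x₀| + |h.1| := abs_add_le _ _
        _ < |x₀| + (δ - |x₀|) := by
            have := lt_of_lt_of_le hh1 (min_le_left _ _); linarith
        _ = δ := by ring
    have hy2 : |h.2| < δ := lt_of_lt_of_le hh2 (le_trans (min_le_right _ _) (min_le_right _ _))
    have hyη : |h.2| < η := lt_of_lt_of_le hh2 (le_trans (min_le_right _ _) (min_le_left _ _))
    set t : ℝ := B (x₀ + h.1) h.2 with ht
    have htpos : 0 < t := hBpos _ _ hx hy2
    have ht1 : |t - 1| ≤ Sa h.2 := hsub _ _ (le_of_lt (lt_of_lt_of_le hx hδlt1.le))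
    have ht2 : |t ^ ((1:ℝ)/q) - 1| ≤ |t - 1| :=
      aux_abs_rpow_sub_one htpos (by positivity) (by
        rw [div_le_one hq0]; exact_mod_cast hq)
    have hkey : ‖F ((x₀, 0) + h) - F (x₀, 0) - (ContinuousLinearMap.id ℝ (ℝ × ℝ)) h‖
        = |h.2 * (t ^ ((1:ℝ)/q) - 1)| := by
      rw [hFeq]
      simp only [Prod.fst_add, Prod.snd_add, ContinuousLinearMap.id_apply]
      rw [show ((0:ℝ) + h.2) = h.2 from zero_add _]
      rw [show (0:ℝ) * B x₀ 0 ^ ((1:ℝ)/q) = 0 from zero_mul _]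
      rw [Prod.norm_def]
      simp only [Prod.fst_sub, Prod.snd_sub]
      rw [show x₀ + h.1 - x₀ - h.1 = 0 by ring]
      rw [show h.2 * t ^ ((1:ℝ)/q) - 0 - h.2 = h.2 * (t ^ ((1:ℝ)/q) - 1) by ring]
      simp only [Real.norm_eq_abs, abs_zero, abs_mul]
      exact max_eq_right (by positivity)
    rw [hkey, abs_mul]
    calc |h.2| * |t ^ ((1:ℝ)/q) - 1| ≤ |h.2| * ε := by
          apply mul_le_mul_of_nonneg_left _ (abs_nonneg _)
          exact le_trans ht2 (le_trans ht1 (le_of_lt (hηs _ hyη)))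
      _ ≤ ε * ‖h‖ := by
          rw [mul_comm]
          exact mul_le_mul_of_nonneg_left (norm_snd_le h) hε.le
  -- derivative at points off the x-axis
  have hderiv1 : ∀ x y : ℝ, |x| < δ → |y| < δ → y ≠ 0 →
      HasFDerivAt F (Dmap (x, y)) (x, y) := by
    intro x y hx hy hy0
    set d : ℕ → ℝ := fun i => (c * (g i).derivative.eval (c * Real.log y)
        + ((q*(i-1):ℕ):ℝ) * (g i).eval (c * Real.log y)) * y ^ (q*(i-1) - 1) with hd'
    have hterm : ∀ i ∈ Finset.Icc 2 N,
        HasFDerivAt (fun w : ℝ × ℝ => w.1 ^ (p*(i-1)) * Jf i w.2)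
        ((x ^ (p*(i-1))) • (d i • ContinuousLinearMap.snd ℝ ℝ ℝ)
          + (Jf i y) • ((((p*(i-1):ℕ):ℝ) * x ^ (p*(i-1) - 1)) •
              ContinuousLinearMap.fst ℝ ℝ ℝ)) (x, y) := by
      intro i hi
      have h2 : 2 ≤ i := (Finset.mem_Icc.mp hi).1
      have hu : HasFDerivAt (fun w : ℝ × ℝ => w.1 ^ (p*(i-1)))
          ((((p*(i-1):ℕ):ℝ) * x ^ (p*(i-1) - 1)) • ContinuousLinearMap.fst ℝ ℝ ℝ) (x, y) :=
        (hasDerivAt_pow (p*(i-1)) x).comp_hasFDerivAt (x, y) hasFDerivAt_fst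
      have hv : HasFDerivAt (fun w : ℝ × ℝ => Jf i w.2)
          (d i • ContinuousLinearMap.snd ℝ ℝ ℝ) (x, y) :=
        (aux_hasDerivAt_eval_log_pow (g i) c _ (hqi i h2) hy0).comp_hasFDerivAt (h₂ := Jf i)
          (x, y) hasFDerivAt_snd
      exact hu.mul hv
    have hSder := HasFDerivAt.sum hterm
    have hBder : HasFDerivAt (fun w : ℝ × ℝ => B w.1 w.2)
        (∑ i ∈ Finset.Icc 2 N, ((x ^ (p*(i-1))) • (d i • ContinuousLinearMap.snd ℝ ℝ ℝ)
          + (Jf i y) • ((((p*(i-1):ℕ):ℝ) * x ^ (p*(i-1) - 1)) •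
              ContinuousLinearMap.fst ℝ ℝ ℝ))) (x, y) := by
      have heq : (fun w : ℝ × ℝ => B w.1 w.2)
          = fun w => 1 + ∑ i ∈ Finset.Icc 2 N, w.1 ^ (p*(i-1)) * Jf i w.2 := by
        funext w; exact hBeq w.1 w.2
      rw [heq]
      exact (HasFDerivAt.fun_sum hterm).const_add 1
    have hBp : 0 < B x y := hBpos x y hx hy
    have hr : HasDerivAt (fun t : ℝ => t ^ ((1:ℝ)/q))
        (((1:ℝ)/q) * (B x y) ^ ((1:ℝ)/q - 1)) (B x y) :=
      Real.hasDerivAt_rpow_const (Or.inl hBp.ne')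
    have hrc := hr.comp_hasFDerivAt (x, y) hBder
    have hsnd : HasFDerivAt (fun w : ℝ × ℝ => w.2)
        (ContinuousLinearMap.snd ℝ ℝ ℝ) (x, y) := hasFDerivAt_snd
    have hH := hsnd.mul hrc
    rw [hFeq]
    refine (hasFDerivAt_fst.prodMk hH).congr_fderiv (Eq.symm ?_)
    -- equality of the two continuous linear maps
    apply ContinuousLinearMap.ext
    intro v
    apply Prod.ext
    · simp [hD]
    · simp only [hD, ContinuousLinearMap.prod_apply, ContinuousLinearMap.add_apply,
        ContinuousLinearMap.smul_apply, ContinuousLinearMap.coe_fst',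
        ContinuousLinearMap.coe_snd', ContinuousLinearMap.coe_sum',
        Finset.sum_apply, smul_eq_mul, hAf, hCf]
      simp only [Function.comp_apply]
      have hA1 : ∑ i ∈ Finset.Icc 2 N, ((p*(i-1):ℕ):ℝ) * x ^ (p*(i-1) - 1) *
            ((g i).eval (c * Real.log y) * y ^ (q*(i-1) + 1))
          = y * ∑ i ∈ Finset.Icc 2 N, Jf i y * (((p*(i-1):ℕ):ℝ) * x ^ (p*(i-1) - 1)) := by
        rw [Finset.mul_sum]
        refine Finset.sum_congr rfl fun i hi => ?_
        simp only [hJf]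
        rw [pow_succ]
        ring
      have hC1 : ∑ i ∈ Finset.Icc 2 N, x ^ (p*(i-1)) *
            ((c * (g i).derivative.eval (c * Real.log y)
              + ((q*(i-1):ℕ):ℝ) * (g i).eval (c * Real.log y)) * y ^ (q*(i-1)))
          = y * ∑ i ∈ Finset.Icc 2 N, x ^ (p*(i-1)) * d i := by
        rw [Finset.mul_sum]
        refine Finset.sum_congr rfl fun i hi => ?_
        have h2 : 2 ≤ i := (Finset.mem_Icc.mp hi).1
        obtain ⟨k, hk⟩ : ∃ k, q*(i-1) = k + 1 :=
          ⟨q*(i-1) - 1, (Nat.succ_pred_eq_of_pos (hqi i h2)).symm⟩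
        simp only [hd', hk, Nat.add_sub_cancel, pow_succ]
        ring
      have hRS : ∑ i ∈ Finset.Icc 2 N,
            (x ^ (p*(i-1)) * (d i * v.2)
              + Jf i y * (((p*(i-1):ℕ):ℝ) * x ^ (p*(i-1) - 1) * v.1))
          = (∑ i ∈ Finset.Icc 2 N, x ^ (p*(i-1)) * d i) * v.2
            + (∑ i ∈ Finset.Icc 2 N, Jf i y * (((p*(i-1):ℕ):ℝ) * x ^ (p*(i-1) - 1))) * v.1 := by
        rw [Finset.sum_add_distrib, Finset.sum_mul, Finset.sum_mul]
        congr 1 <;> exact Finset.sum_congr rfl fun i _ => by ring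
      rw [hA1, hC1, hRS]
      ring
  -- identification of the derivative on the axes
  have hDid : ∀ x : ℝ, Dmap (x, 0) = ContinuousLinearMap.id ℝ (ℝ × ℝ) := by
    intro x
    apply ContinuousLinearMap.ext
    intro v
    apply Prod.ext <;> simp [hD, hAf0, hCf0]
  have hderivAll : ∀ z : ℝ × ℝ, |z.1| < δ → |z.2| < δ → HasFDerivAt F (Dmap z) z := by
    intro z hx hy
    obtain ⟨x, y⟩ := z
    rcases eq_or_ne y 0 with rfl | hy0
    · rw [hDid x]; exact key0 x hx
    · exact hderiv1 x y hx hy hy0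
  -- continuity of the derivative
  set sq : Set (ℝ × ℝ) := Set.Ioo (-δ) δ ×ˢ Set.Ioo (-δ) δ with hsq
  have hsqopen : IsOpen sq := (isOpen_Ioo).prod (isOpen_Ioo)
  have hmem : ∀ z : ℝ × ℝ, z ∈ sq → (|z.1| < δ ∧ |z.2| < δ) := by
    intro z hz
    rw [hsq, Set.mem_prod, Set.mem_Ioo, Set.mem_Ioo] at hz
    exact ⟨abs_lt.mpr ⟨hz.1.1, hz.1.2⟩, abs_lt.mpr ⟨hz.2.1, hz.2.2⟩⟩
  have hBconton : Continuous (fun z : ℝ × ℝ => B z.1 z.2) := by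
    have heq : (fun z : ℝ × ℝ => B z.1 z.2)
        = fun z => 1 + ∑ i ∈ Finset.Icc 2 N, z.1 ^ (p*(i-1)) * Jf i z.2 :=
      funext fun z => hBeq z.1 z.2
    rw [heq]
    refine continuous_const.add (continuous_finset_sum _ fun i hi => ?_)
    exact (continuous_fst.pow _).mul
      ((hJcont i (Finset.mem_Icc.mp hi).1).comp continuous_snd)
  have hBne : ∀ z ∈ sq, B z.1 z.2 ≠ 0 := fun z hz =>
    (hBpos _ _ (hmem z hz).1 (hmem z hz).2).ne'
  have hrpow1 : ContinuousOn (fun z : ℝ × ℝ => (B z.1 z.2) ^ ((1:ℝ)/q)) sq :=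
    ContinuousOn.rpow_const hBconton.continuousOn (fun z hz => Or.inl (hBne z hz))
  have hrpow2 : ContinuousOn (fun z : ℝ × ℝ => (B z.1 z.2) ^ ((1:ℝ)/q - 1)) sq :=
    ContinuousOn.rpow_const hBconton.continuousOn (fun z hz => Or.inl (hBne z hz))
  have hAcont : ContinuousOn Af sq := by
    simp only [hAf]
    apply (continuousOn_const.mul hrpow2).mul
    apply Continuous.continuousOn
    refine continuous_finset_sum _ fun i hi => ?_
    have h2 := (Finset.mem_Icc.mp hi).1
    exact (continuous_const.mul (continuous_fst.pow _)).mul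
      ((aux_cont_eval_log_pow (g i) c (q*(i-1) + 1) (by omega)).comp continuous_snd)
  have hQc : ∀ i, 2 ≤ i → Continuous (fun y : ℝ =>
      (c * (g i).derivative.eval (c * Real.log y)
        + ((q*(i-1):ℕ):ℝ) * (g i).eval (c * Real.log y)) * y ^ (q*(i-1))) := by
    intro i h2
    have h := aux_cont_eval_log_pow
      (Polynomial.C c * (g i).derivative + Polynomial.C ((q*(i-1):ℕ):ℝ) * g i)
      c (q*(i-1)) (hqi i h2)
    simpa using h
  have hCcont : ContinuousOn Cf sq := by
    simp only [hCf]
    apply hrpow1.add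
    apply (continuousOn_const.mul hrpow2).mul
    apply Continuous.continuousOn
    refine continuous_finset_sum _ fun i hi => ?_
    exact (continuous_fst.pow _).mul
      ((hQc i (Finset.mem_Icc.mp hi).1).comp continuous_snd)
  have hDalt : Dmap = fun z =>
      ((ContinuousLinearMap.fst ℝ ℝ ℝ).prod (0 : ℝ × ℝ →L[ℝ] ℝ))
      + Af z • ((0 : ℝ × ℝ →L[ℝ] ℝ).prod (ContinuousLinearMap.fst ℝ ℝ ℝ))
      + Cf z • ((0 : ℝ × ℝ →L[ℝ] ℝ).prod (ContinuousLinearMap.snd ℝ ℝ ℝ)) := by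
    funext z
    apply ContinuousLinearMap.ext
    intro v
    apply Prod.ext <;> simp [hD]
  have hDcont : ContinuousOn Dmap sq := by
    rw [hDalt]
    exact (continuousOn_const.add (hAcont.smul continuousOn_const)).add
      (hCcont.smul continuousOn_const)
  have hCD : ContDiffOn ℝ 1 F sq := by
    rw [show (1 : WithTop ℕ∞) = 0 + 1 from (zero_add 1).symm,
      contDiffOn_succ_iff_fderiv_of_isOpen hsqopen]
    refine ⟨fun z hz => ((hderivAll z (hmem z hz).1
      (hmem z hz).2).differentiableAt).differentiableWithinAt, ?_, ?_⟩
    · intro h; exact absurd h (by simp)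
    · rw [contDiffOn_zero]
      apply hDcont.congr
      intro z hz
      exact (hderivAll z (hmem z hz).1 (hmem z hz).2).fderiv
  -- assembling everything
  refine ⟨δ, hδpos, hδlt1, ?_, ?_, ?_, ?_, ?_, ?_, ?_, ?_⟩
  · intro x y hx hy _
    exact hBpos x y hx hy
  · exact hCD
  · intro x hx
    exact key0 x (abs_lt.mpr ⟨hx.1, hx.2⟩)
  · intro y hy
    have h := hderivAll (0, y) (by simpa using hδpos) (abs_lt.mpr ⟨hy.1, hy.2⟩)
    have heq : Dmap (0, y) = (ContinuousLinearMap.fst ℝ ℝ ℝ).prod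
        (G y • ContinuousLinearMap.fst ℝ ℝ ℝ + ContinuousLinearMap.snd ℝ ℝ ℝ) := by
      apply ContinuousLinearMap.ext
      intro v
      apply Prod.ext <;> simp [hD, hAf0', hCf0']
    rw [← heq]
    exact h
  · exact key0 0 (by simpa using hδpos)
  · intro x
    rw [hF]
    simp
  · intro y
    rw [hF]
    simp
  · intro x y hx hy
    have hBnn : 0 ≤ B x y ^ ((1:ℝ)/q) := Real.rpow_nonneg (hBpos x y hx hy).le _
    rw [hFeq]
    refine ⟨fun h => h, fun h => h, fun h => mul_nonneg h hBnn, fun h => ?_⟩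
    exact mul_nonpos_iff.mpr (Or.inr ⟨h, hBnn⟩)
end

section
/- Let S ⊂ (0,1] be a strictly decreasing sequence converging to 0 whose box dimension dim_B S exists, let 0 < r ≤ 1, and let H_{r,S} = {(x,y) ∈ (0,1] × (0,1] : x^r y = c for some c ∈ S}. Then both the lower box dimension and the upper box dimension of H_{r,S} are at least 1 + dim_B S. -/
open Filter MeasureTheory Metric Set Real

/-- Lower box dimension of `U ⊆ X`, with ambient dimension `N`, defined through the
Lebesgue measure of `ε`-neighborhoods:
`inf {d ≥ 0 : liminf_{ε→0⁺} |U_ε| / ε^{N−d} = 0}`. -/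
noncomputable def lowerBoxDim {X : Type*} [PseudoEMetricSpace X] [MeasureSpace X]
    (N : ℝ) (U : Set X) : ℝ :=
  sInf {d : ℝ | 0 ≤ d ∧
    Filter.liminf
      (fun ε : ℝ => volume (Metric.thickening ε U) / ENNReal.ofReal (ε ^ (N - d)))
      (nhdsWithin 0 (Set.Ioi 0)) = 0}

/-- Upper box dimension, defined with `limsup` instead of `liminf`. -/
noncomputable def upperBoxDim {X : Type*} [PseudoEMetricSpace X] [MeasureSpace X]
    (N : ℝ) (U : Set X) : ℝ :=
  sInf {d : ℝ | 0 ≤ d ∧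
    Filter.limsup
      (fun ε : ℝ => volume (Metric.thickening ε U) / ENNReal.ofReal (ε ^ (N - d)))
      (nhdsWithin 0 (Set.Ioi 0)) = 0}

open scoped ENNReal Topology

/-!
Near the transversal `x = 1` the hyperbolas `x ^ r * y = c` are locally parallel. For
`x ∈ (1/2, 1]` the slices `{y | x ^ r * y ∈ T}` have measure at least `|T|`, and a point with
`x ^ r * y` within `ε` of some `c ≤ 1/2` lies within `2ε` of the hyperbola through `c` (this is
where `r ≤ 1` enters, via `x ^ r ≥ x > 1/2`). Hence `|S_ε| ≤ C |H_{2ε}|`, the finitely many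
`c > 1/2` costing only a constant factor, so any exponent `d` with `|H_ε| / ε ^ (2 - d) → 0`
(along a liminf or a limsup) yields the exponent `d - 1` for `S`, which is nonnegative because
`|S_ε| ≥ 2ε`.
-/

section Filter

variable {𝕜 : Type*} [Field 𝕜] [LinearOrder 𝕜] [IsStrictOrderedRing 𝕜] [TopologicalSpace 𝕜]
  [OrderTopology 𝕜]

theorem map_mul_left_nhdsGT_zero {c : 𝕜} (hc : 0 < c) : map (c * ·) (𝓝[>] 0) = 𝓝[>] 0 := by
  conv_lhs => rw [← comap_mulLeft_nhdsGT_zero hc]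
  exact map_comap_of_surjective (mul_left_surjective₀ hc.ne') _

variable {α : Type*} [ConditionallyCompleteLattice α]

theorem liminf_comp_mul_left_nhdsGT_zero (u : 𝕜 → α) {c : 𝕜} (hc : 0 < c) :
    liminf (fun ε => u (c * ε)) (𝓝[>] 0) = liminf u (𝓝[>] 0) :=
  (liminf_comp u (c * ·) _).trans (congrArg _ (map_mul_left_nhdsGT_zero hc))

theorem limsup_comp_mul_left_nhdsGT_zero (u : 𝕜 → α) {c : 𝕜} (hc : 0 < c) :
    limsup (fun ε => u (c * ε)) (𝓝[>] 0) = limsup u (𝓝[>] 0) :=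
  (limsup_comp u (c * ·) _).trans (congrArg _ (map_mul_left_nhdsGT_zero hc))

end Filter

theorem sInf_setOf_nonneg_add_le_sInf {P Q : ℝ → Prop} {k : ℝ} (hQ : ∃ d, 0 ≤ d ∧ Q d)
    (hPQ : ∀ d, Q d → k ≤ d ∧ P (d - k)) :
    sInf {d | 0 ≤ d ∧ P d} + k ≤ sInf {d | 0 ≤ d ∧ Q d} := by
  refine le_csInf hQ fun d ⟨_, hd⟩ => ?_
  obtain ⟨hkd, hPd⟩ := hPQ d hd
  linarith [csInf_le (s := {d | 0 ≤ d ∧ P d}) ⟨0, fun _ h => h.1⟩ ⟨sub_nonneg.2 hkd, hPd⟩]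

section ThickeningRatio

variable {X Y : Type*} [PseudoMetricSpace X] [MeasureSpace X] [PseudoMetricSpace Y] [MeasureSpace Y]

noncomputable def thickeningRatio (U : Set X) (t ε : ℝ) : ℝ≥0∞ :=
  volume (thickening ε U) / ENNReal.ofReal (ε ^ t)

theorem lowerBoxDim_eq_sInf (N : ℝ) (U : Set X) :
    lowerBoxDim N U = sInf {d | 0 ≤ d ∧ liminf (thickeningRatio U (N - d)) (𝓝[>] 0) = 0} :=
  rfl

theorem upperBoxDim_eq_sInf (N : ℝ) (U : Set X) :
    upperBoxDim N U = sInf {d | 0 ≤ d ∧ limsup (thickeningRatio U (N - d)) (𝓝[>] 0) = 0} :=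
  rfl

variable {U : Set X} {V : Set Y} {C : ℝ≥0∞}

theorem thickeningRatio_le_of_volume_thickening_le {ε : ℝ} (hε : 0 < ε)
    (h : volume (thickening ε V) ≤ C * volume (thickening (2 * ε) U)) (t : ℝ) :
    thickeningRatio V t ε ≤ C * ENNReal.ofReal (2 ^ t) * thickeningRatio U t (2 * ε) := by
  have h2 : ENNReal.ofReal (2 ^ t) ≠ 0 := (ENNReal.ofReal_pos.2 (rpow_pos_of_pos two_pos t)).ne'
  rw [thickeningRatio, thickeningRatio, mul_rpow zero_le_two hε.le,
    ENNReal.ofReal_mul (rpow_nonneg zero_le_two t), mul_assoc, ← mul_div_assoc,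
    ENNReal.mul_div_mul_left _ _ h2 ENNReal.ofReal_ne_top, ← mul_div_assoc]
  exact ENNReal.div_le_div_right h _

theorem liminf_thickeningRatio_eq_zero_of_le (hC : C ≠ ∞)
    (hVU : ∀ ε > 0, volume (thickening ε V) ≤ C * volume (thickening (2 * ε) U)) {t : ℝ}
    (hU : liminf (thickeningRatio U t) (𝓝[>] 0) = 0) :
    liminf (thickeningRatio V t) (𝓝[>] 0) = 0 := by
  refine le_antisymm ?_ zero_le
  calc liminf (thickeningRatio V t) (𝓝[>] 0)
      ≤ liminf (fun ε => C * ENNReal.ofReal (2 ^ t) * thickeningRatio U t (2 * ε)) (𝓝[>] 0) :=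
        liminf_le_liminf <| eventually_mem_nhdsWithin.mono fun ε hε =>
          thickeningRatio_le_of_volume_thickening_le hε (hVU ε hε) t
    _ = 0 := by
        rw [ENNReal.liminf_const_mul_of_ne_top (ENNReal.mul_ne_top hC ENNReal.ofReal_ne_top),
          liminf_comp_mul_left_nhdsGT_zero _ two_pos, hU, mul_zero]

theorem limsup_thickeningRatio_eq_zero_of_le (hC : C ≠ ∞)
    (hVU : ∀ ε > 0, volume (thickening ε V) ≤ C * volume (thickening (2 * ε) U)) {t : ℝ}
    (hU : limsup (thickeningRatio U t) (𝓝[>] 0) = 0) :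
    limsup (thickeningRatio V t) (𝓝[>] 0) = 0 := by
  refine le_antisymm ?_ zero_le
  calc limsup (thickeningRatio V t) (𝓝[>] 0)
      ≤ limsup (fun ε => C * ENNReal.ofReal (2 ^ t) * thickeningRatio U t (2 * ε)) (𝓝[>] 0) :=
        limsup_le_limsup <| eventually_mem_nhdsWithin.mono fun ε hε =>
          thickeningRatio_le_of_volume_thickening_le hε (hVU ε hε) t
    _ = 0 := by
        rw [ENNReal.limsup_const_mul_of_ne_top (ENNReal.mul_ne_top hC ENNReal.ofReal_ne_top),
          limsup_comp_mul_left_nhdsGT_zero _ two_pos, hU, mul_zero]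

theorem tendsto_thickeningRatio_of_isBounded [ProperSpace X]
    [IsFiniteMeasureOnCompacts (volume : Measure X)] (hU : Bornology.IsBounded U) {t : ℝ}
    (ht : t < 0) :
    Tendsto (thickeningRatio U t) (𝓝[>] 0) (𝓝 0) := by
  have hpow : Tendsto (fun ε : ℝ => ENNReal.ofReal (ε ^ (-t))) (𝓝[>] 0) (𝓝 0) := by
    have := ((continuous_rpow_const (neg_nonneg.2 ht.le)).tendsto 0).mono_left
      (nhdsWithin_le_nhds (s := Ioi 0))
    rw [zero_rpow (neg_ne_zero.2 ht.ne)] at this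
    simpa using ENNReal.tendsto_ofReal this
  have hfin : volume (thickening 1 U) ≠ ∞ := (hU.thickening.measure_lt_top).ne
  have hbound := ENNReal.Tendsto.const_mul hpow (Or.inr hfin)
  rw [mul_zero] at hbound
  refine tendsto_of_tendsto_of_tendsto_of_le_of_le' tendsto_const_nhds hbound
    (Eventually.of_forall fun _ => zero_le) ?_
  filter_upwards [Ioc_mem_nhdsGT (zero_lt_one' ℝ)] with ε ⟨hε0, hε1⟩
  calc thickeningRatio U t ε = volume (thickening ε U) * ENNReal.ofReal (ε ^ (-t)) := by
        rw [thickeningRatio, div_eq_mul_inv, ← ENNReal.ofReal_inv_of_pos (rpow_pos_of_pos hε0 t),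
          ← rpow_neg hε0.le]
    _ ≤ volume (thickening 1 U) * ENNReal.ofReal (ε ^ (-t)) := by gcongr

variable [ProperSpace X] [IsFiniteMeasureOnCompacts (volume : Measure X)] {M N : ℝ}

theorem lowerBoxDim_add_sub_le (hU : Bornology.IsBounded U) (hC : C ≠ ∞)
    (hVU : ∀ ε > 0, volume (thickening ε V) ≤ C * volume (thickening (2 * ε) U))
    (hV : ∀ t, M < t → liminf (thickeningRatio V t) (𝓝[>] 0) ≠ 0) :
    lowerBoxDim M V + (N - M) ≤ lowerBoxDim N U := by
  rw [lowerBoxDim_eq_sInf, lowerBoxDim_eq_sInf]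
  refine sInf_setOf_nonneg_add_le_sInf ⟨max 0 (N + 1), le_max_left _ _,
    (tendsto_thickeningRatio_of_isBounded hU ?_).liminf_eq⟩ fun d hd => ?_
  · linarith [le_max_right 0 (N + 1)]
  have hVd := liminf_thickeningRatio_eq_zero_of_le hC hVU hd
  have hdM : N - d ≤ M := not_lt.1 fun h => hV _ h hVd
  refine ⟨by linarith, ?_⟩
  rwa [show M - (d - (N - M)) = N - d by ring]

theorem upperBoxDim_add_sub_le (hU : Bornology.IsBounded U) (hC : C ≠ ∞)
    (hVU : ∀ ε > 0, volume (thickening ε V) ≤ C * volume (thickening (2 * ε) U))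
    (hV : ∀ t, M < t → limsup (thickeningRatio V t) (𝓝[>] 0) ≠ 0) :
    upperBoxDim M V + (N - M) ≤ upperBoxDim N U := by
  rw [upperBoxDim_eq_sInf, upperBoxDim_eq_sInf]
  refine sInf_setOf_nonneg_add_le_sInf ⟨max 0 (N + 1), le_max_left _ _,
    (tendsto_thickeningRatio_of_isBounded hU ?_).limsup_eq⟩ fun d hd => ?_
  · linarith [le_max_right 0 (N + 1)]
  have hVd := limsup_thickeningRatio_eq_zero_of_le hC hVU hd
  have hdM : N - d ≤ M := not_lt.1 fun h => hV _ h hVd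
  refine ⟨by linarith, ?_⟩
  rwa [show M - (d - (N - M)) = N - d by ring]

end ThickeningRatio

theorem one_le_liminf_thickeningRatio {S : Set ℝ} (hS : S.Nonempty) {t : ℝ} (ht : 1 ≤ t) :
    1 ≤ liminf (thickeningRatio S t) (𝓝[>] 0) := by
  obtain ⟨x, hx⟩ := hS
  refine le_liminf_of_le (by isBoundedDefault) ?_
  filter_upwards [Ioc_mem_nhdsGT (zero_lt_one' ℝ)] with ε ⟨hε0, hε1⟩
  have hεt : ε ^ t ≤ 2 * ε := by
    have := rpow_le_rpow_of_exponent_ge hε0 hε1 ht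
    rw [rpow_one] at this
    linarith
  rw [thickeningRatio, ENNReal.le_div_iff_mul_le
    (Or.inl (ENNReal.ofReal_pos.2 (rpow_pos_of_pos hε0 t)).ne') (Or.inl ENNReal.ofReal_ne_top),
    one_mul]
  calc ENNReal.ofReal (ε ^ t) ≤ ENNReal.ofReal (2 * ε) := ENNReal.ofReal_le_ofReal hεt
    _ = volume (ball x ε) := (Real.volume_ball x ε).symm
    _ ≤ volume (thickening ε S) := measure_mono (ball_subset_thickening hx ε)

theorem one_le_limsup_thickeningRatio {S : Set ℝ} (hS : S.Nonempty) {t : ℝ} (ht : 1 ≤ t) :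
    1 ≤ limsup (thickeningRatio S t) (𝓝[>] 0) :=
  (one_le_liminf_thickeningRatio hS ht).trans liminf_le_limsup

theorem MeasureTheory.Measure.addHaar_thickening_union_finset_le {E : Type*}
    [NormedAddCommGroup E] [MeasurableSpace E] [BorelSpace E] (μ : Measure E)
    [μ.IsAddHaarMeasure] {S : Set E} (hS : S.Nonempty) (F : Finset E) (ε : ℝ) :
    μ (thickening ε (S ∪ F)) ≤ (F.card + 1) * μ (thickening ε S) := by
  obtain ⟨x, hx⟩ := hS
  have hball (y : E) : μ (ball y ε) ≤ μ (thickening ε S) := by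
    rw [addHaar_ball_center μ y, ← addHaar_ball_center μ x]
    exact measure_mono (ball_subset_thickening hx ε)
  calc μ (thickening ε (S ∪ F)) ≤ μ (thickening ε S) + ∑ y ∈ F, μ (ball y ε) := by
        rw [thickening_union, thickening_eq_biUnion_ball (E := (F : Set E))]
        exact (measure_union_le _ _).trans (add_le_add le_rfl (measure_biUnion_finset_le F _))
    _ ≤ μ (thickening ε S) + ∑ _y ∈ F, μ (thickening ε S) :=
        add_le_add le_rfl (Finset.sum_le_sum fun y _ => hball y)
    _ = (F.card + 1) * μ (thickening ε S) := by rw [Finset.sum_const, nsmul_eq_mul]; ring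

def hyperbolaFamily (r : ℝ) (S : Set ℝ) : Set (ℝ × ℝ) :=
  {p | p.1 ∈ Ioc 0 1 ∧ p.2 ∈ Ioc 0 1 ∧ p.1 ^ r * p.2 ∈ S}

theorem isBounded_hyperbolaFamily (r : ℝ) (S : Set ℝ) :
    Bornology.IsBounded (hyperbolaFamily r S) :=
  (isBounded_Ioc 0 1).prod (isBounded_Ioc 0 1) |>.subset fun _ hp => ⟨hp.1, hp.2.1⟩

theorem hyperbolaFamily_mono (r : ℝ) {S S' : Set ℝ} (h : S ⊆ S') :
    hyperbolaFamily r S ⊆ hyperbolaFamily r S' :=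
  fun _ hp => ⟨hp.1, hp.2.1, h hp.2.2⟩

theorem ofReal_sub_mul_volume_le_volume_setOf_rpow_mul_mem {a b r : ℝ} (ha : 0 ≤ a) (hb : b ≤ 1)
    (hr : 0 ≤ r) {T : Set ℝ} (hT : MeasurableSet T) :
    ENNReal.ofReal (b - a) * volume T ≤ volume {p : ℝ × ℝ | p.1 ∈ Ioc a b ∧ p.1 ^ r * p.2 ∈ T} := by
  set A := {p : ℝ × ℝ | p.1 ∈ Ioc a b ∧ p.1 ^ r * p.2 ∈ T}
  have hA : MeasurableSet A :=
    (measurable_fst measurableSet_Ioc).inter ((measurable_fst.pow_const r).mul measurable_snd hT)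
  have hslice : ∀ x ∈ Ioc a b, volume T ≤ volume (Prod.mk x ⁻¹' A) := by
    intro x hx
    have hx0 : 0 < x := ha.trans_lt hx.1
    have hxr : 0 < x ^ r := rpow_pos_of_pos hx0 r
    have hxr1 : 1 ≤ (x ^ r)⁻¹ := (one_le_inv₀ hxr).2 (rpow_le_one hx0.le (hx.2.trans hb) hr)
    have : Prod.mk x ⁻¹' A = (x ^ r * ·) ⁻¹' T := by ext y; simp [A, hx.1, hx.2]
    rw [this, Real.volume_preimage_mul_left hxr.ne', abs_of_pos (inv_pos.2 hxr)]
    exact le_mul_of_one_le_left zero_le (ENNReal.one_le_ofReal.2 hxr1)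
  calc ENNReal.ofReal (b - a) * volume T = ∫⁻ _ in Ioc a b, volume T := by
        rw [setLIntegral_const, Real.volume_Ioc, mul_comm]
    _ ≤ ∫⁻ x in Ioc a b, volume (Prod.mk x ⁻¹' A) := setLIntegral_mono' measurableSet_Ioc hslice
    _ ≤ ∫⁻ x, volume (Prod.mk x ⁻¹' A) := setLIntegral_le_lintegral _ _
    _ = volume A := by rw [Measure.volume_eq_prod, Measure.prod_apply hA]

theorem setOf_rpow_mul_mem_thickening_subset {r ε : ℝ} (hr1 : r ≤ 1) {S : Set ℝ}
    (hS : S ⊆ Ioc 0 (1 / 2)) :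
    {p : ℝ × ℝ | p.1 ∈ Ioc (1 / 2) 1 ∧ p.1 ^ r * p.2 ∈ thickening ε S} ⊆
      thickening (2 * ε) (hyperbolaFamily r S) := by
  rintro ⟨x, y⟩ ⟨hx, hxy⟩
  obtain ⟨c, hc, hdist⟩ := mem_thickening_iff.1 hxy
  have hx0 : 0 < x := one_half_pos.trans hx.1
  have hxr : 1 / 2 ≤ x ^ r := hx.1.le.trans (self_le_rpow_of_le_one hx0.le hx.2 hr1)
  have hxr0 : 0 < x ^ r := one_half_pos.trans_le hxr
  have hq : (x, c / x ^ r) ∈ hyperbolaFamily r S :=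
    ⟨⟨hx0, hx.2⟩, ⟨div_pos (hS hc).1 hxr0, (div_le_one hxr0).2 ((hS hc).2.trans hxr)⟩,
      by rwa [mul_div_cancel₀ _ hxr0.ne']⟩
  refine mem_thickening_iff.2 ⟨_, hq, ?_⟩
  have hy : y - c / x ^ r = (x ^ r * y - c) / x ^ r := by field_simp
  rw [Real.dist_eq] at hdist
  rw [Prod.dist_eq, dist_self, max_eq_right dist_nonneg, Real.dist_eq, hy, abs_div,
    abs_of_pos hxr0, div_lt_iff₀ hxr0]
  nlinarith [abs_nonneg (x ^ r * y - c)]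

theorem volume_thickening_le_two_mul_volume_thickening_hyperbolaFamily {r : ℝ} (hr0 : 0 ≤ r)
    (hr1 : r ≤ 1) {S : Set ℝ} (hS : S ⊆ Ioc 0 (1 / 2)) (ε : ℝ) :
    volume (thickening ε S) ≤ 2 * volume (thickening (2 * ε) (hyperbolaFamily r S)) := by
  have h := (ofReal_sub_mul_volume_le_volume_setOf_rpow_mul_mem one_half_pos.le le_rfl hr0
    isOpen_thickening.measurableSet).trans
      (measure_mono (setOf_rpow_mul_mem_thickening_subset (ε := ε) hr1 hS))
  rw [show (1 : ℝ) - 1 / 2 = 2⁻¹ by norm_num, ENNReal.ofReal_inv_of_pos two_pos,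
    ENNReal.ofReal_ofNat] at h
  calc volume (thickening ε S) = 2 * (2⁻¹ * volume (thickening ε S)) :=
        (ENNReal.mul_inv_cancel_left two_ne_zero ENNReal.ofNat_ne_top).symm
    _ ≤ 2 * volume (thickening (2 * ε) (hyperbolaFamily r S)) := by gcongr

theorem exists_volume_thickening_range_le {r : ℝ} (hr0 : 0 ≤ r) (hr1 : r ≤ 1) {s : ℕ → ℝ}
    (hpos : ∀ n, 0 < s n) (hlim : Tendsto s atTop (𝓝 0)) :
    ∃ C : ℝ≥0∞, C ≠ ∞ ∧ ∀ ε, volume (thickening ε (range s)) ≤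
      C * volume (thickening (2 * ε) (hyperbolaFamily r (range s))) := by
  obtain ⟨N, hN⟩ := eventually_atTop.1 (hlim.eventually (Iic_mem_nhds (one_half_pos (α := ℝ))))
  set F := (Finset.range N).image s
  have htail : s '' Ici N ⊆ Ioc 0 (1 / 2) := by
    rintro _ ⟨n, hn, rfl⟩
    exact ⟨hpos n, hN n hn⟩
  have hcover : range s ⊆ s '' Ici N ∪ F := by
    rintro _ ⟨n, rfl⟩
    rcases le_or_gt N n with h | h
    · exact Or.inl ⟨n, h, rfl⟩
    · exact Or.inr (Finset.mem_coe.2 (Finset.mem_image_of_mem s (Finset.mem_range.2 h)))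
  refine ⟨(F.card + 1) * 2, by finiteness, fun ε => ?_⟩
  calc volume (thickening ε (range s)) ≤ volume (thickening ε (s '' Ici N ∪ F)) :=
        measure_mono (thickening_subset_of_subset ε hcover)
    _ ≤ (F.card + 1) * volume (thickening ε (s '' Ici N)) :=
        Measure.addHaar_thickening_union_finset_le volume (nonempty_Ici.image s) F ε
    _ ≤ (F.card + 1) * (2 * volume (thickening (2 * ε) (hyperbolaFamily r (s '' Ici N)))) := by
        gcongr
        exact volume_thickening_le_two_mul_volume_thickening_hyperbolaFamily hr0 hr1 htail ε
    _ ≤ (F.card + 1) * 2 * volume (thickening (2 * ε) (hyperbolaFamily r (range s))) := by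
        rw [mul_assoc]
        gcongr
        exact thickening_subset_of_subset _ (hyperbolaFamily_mono r (image_subset_range _ _))

theorem boxDim_hyperbola_family_lower_bound_general (r : ℝ) (hr0 : 0 < r) (hr1 : r ≤ 1)
    (s : ℕ → ℝ)
    (hmem : ∀ n, s n ∈ Set.Ioc (0:ℝ) 1)
    (hlim : Tendsto s atTop (nhds 0))
    (dS : ℝ)
    (hdS : lowerBoxDim 1 (Set.range s) = dS ∧ upperBoxDim 1 (Set.range s) = dS) :
    1 + dS ≤ lowerBoxDim 2 {p : ℝ × ℝ | p.1 ∈ Set.Ioc (0:ℝ) 1 ∧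
        p.2 ∈ Set.Ioc (0:ℝ) 1 ∧ p.1 ^ r * p.2 ∈ Set.range s} ∧
    1 + dS ≤ upperBoxDim 2 {p : ℝ × ℝ | p.1 ∈ Set.Ioc (0:ℝ) 1 ∧
        p.2 ∈ Set.Ioc (0:ℝ) 1 ∧ p.1 ^ r * p.2 ∈ Set.range s} := by
  change 1 + dS ≤ lowerBoxDim 2 (hyperbolaFamily r (range s)) ∧
    1 + dS ≤ upperBoxDim 2 (hyperbolaFamily r (range s))
  obtain ⟨C, hC, hSH⟩ := exists_volume_thickening_range_le hr0.le hr1 (fun n => (hmem n).1) hlim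
  have hH := isBounded_hyperbolaFamily r (range s)
  have hS : (range s).Nonempty := range_nonempty s
  have hlower := lowerBoxDim_add_sub_le (M := 1) (N := 2) hH hC (fun ε _ => hSH ε)
    fun t ht => (one_pos.trans_le (one_le_liminf_thickeningRatio hS ht.le)).ne'
  have hupper := upperBoxDim_add_sub_le (M := 1) (N := 2) hH hC (fun ε _ => hSH ε)
    fun t ht => (one_pos.trans_le (one_le_limsup_thickeningRatio hS ht.le)).ne'
  rw [hdS.1] at hlower
  rw [hdS.2] at hupper
  constructor <;> linarith

/-- Lower bound for the box dimension of the family of hyperbolas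
`H_{r,S} = {(x,y) ∈ (0,1]² : x^r y ∈ S}` with `0 < r ≤ 1`:
both the lower and upper box dimensions of `H_{r,S}` are at least `1 + dim_B S`,
for any strictly decreasing sequence `S ⊂ (0,1]` converging to `0` whose box
dimension exists. -/
theorem boxDim_hyperbola_family_lower_bound (r : ℝ) (hr0 : 0 < r) (hr1 : r ≤ 1)
    (s : ℕ → ℝ)
    (hmem : ∀ n, s n ∈ Set.Ioc (0:ℝ) 1)
    (hanti : StrictAnti s)
    (hlim : Tendsto s atTop (nhds 0))
    (dS : ℝ)
    (hdS : lowerBoxDim 1 (Set.range s) = dS ∧ upperBoxDim 1 (Set.range s) = dS) :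
    1 + dS ≤ lowerBoxDim 2 {p : ℝ × ℝ | p.1 ∈ Set.Ioc (0:ℝ) 1 ∧
        p.2 ∈ Set.Ioc (0:ℝ) 1 ∧ p.1 ^ r * p.2 ∈ Set.range s} ∧
    1 + dS ≤ upperBoxDim 2 {p : ℝ × ℝ | p.1 ∈ Set.Ioc (0:ℝ) 1 ∧
        p.2 ∈ Set.Ioc (0:ℝ) 1 ∧ p.1 ^ r * p.2 ∈ Set.range s} :=
  boxDim_hyperbola_family_lower_bound_general r hr0 hr1 s hmem hlim dS hdS
end
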